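/- arXiv:2501.00435 — 3 statements merged into one kernel-verified Lean document; each statement's English description precedes it below -/
import Mathlib

section
/- Let Q be the graded quiver with one vertex and three loops a, b, t with degrees |a| = -1, |b| = -2, |t| = -4, with differential d(a) = 0, d(b) = 0, d(t) = ab - ba on the path algebra Γ = kQ. Then for every r ≥ 0, the cohomology H^{-r}(Γ) is nonzero. -/
/-- Let `Γ = kQ` be the free graded path algebra on one vertex and
three loops `a, b, t` of degrees `-1, -2, -4`, with differential `D` of degree
`+1` (a graded derivation with `D ∘ D = 0`) determined by `D a = 0`, `D b = 0`,
`D t = a*b - b*a`.  Then for every `r ≥ 0` the cohomology `H^{-r}(Γ)` is nonzero,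
i.e. there is a cocycle of degree `-r` which is not a coboundary. -/
theorem cohomology_nonzero_in_all_nonpositive_degrees
    (k : Type*) [Field k] (Γ : Type*) [Ring Γ] [Algebra k Γ]
    (𝒜 : ℤ → Submodule k Γ) [GradedAlgebra 𝒜]
    (D : Γ →ₗ[k] Γ)
    (hD2 : ∀ x, D (D x) = 0)
    (hDdeg : ∀ (n : ℤ) (x : Γ), x ∈ 𝒜 n → D x ∈ 𝒜 (n + 1))
    (hLeibniz : ∀ (m n : ℤ) (x y : Γ), x ∈ 𝒜 m → y ∈ 𝒜 n →
      D (x * y) = D x * y + ((Int.negOnePow m : ℤˣ) : ℤ) • (x * D y))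
    (a b t : Γ)
    (ha : a ∈ 𝒜 (-1)) (hb : b ∈ 𝒜 (-2)) (ht : t ∈ 𝒜 (-4))
    -- `Γ` is free on the generators `a, b, t`
    (e : FreeAlgebra k (Fin 3) ≃ₐ[k] Γ)
    (hea : e (FreeAlgebra.ι k 0) = a) (heb : e (FreeAlgebra.ι k 1) = b)
    (het : e (FreeAlgebra.ι k 2) = t)
    (hDa : D a = 0) (hDb : D b = 0) (hDt : D t = a * b - b * a) :
    ∀ r : ℕ, ∃ x : Γ, x ∈ 𝒜 (-(r : ℤ)) ∧ D x = 0 ∧ x ∉ Set.range D := by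
  intro r
  classical
  have h1 : (1 : Γ) ∈ 𝒜 0 := SetLike.one_mem_graded 𝒜
  -- D kills 1
  have hD1 : D 1 = 0 := by
    have h := hLeibniz 0 0 1 1 h1 h1
    simp only [mul_one, one_mul, Int.negOnePow_zero, Units.val_one, one_smul] at h
    exact (left_eq_add.mp h)
  -- powers of a are cocycles of the right degree
  have hapow : ∀ n : ℕ, a ^ n ∈ 𝒜 (-(n : ℤ)) := by
    intro n
    have := SetLike.pow_mem_graded n ha
    simpa using this
  have hDapow : ∀ n : ℕ, D (a ^ n) = 0 := by
    intro n
    induction n with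
    | zero => simpa using hD1
    | succ m ih =>
      have h := hLeibniz (-(m : ℤ)) (-1) (a ^ m) a (hapow m) ha
      rw [ih, hDa] at h
      simpa [pow_succ] using h
  -- the specialization map  a ↦ X, b ↦ 0, t ↦ 0
  set π : Γ →ₐ[k] Polynomial k :=
    (FreeAlgebra.lift k ![Polynomial.X, 0, 0]).comp e.symm.toAlgHom with hπdef
  have hπe : ∀ w : FreeAlgebra k (Fin 3),
      π (e w) = FreeAlgebra.lift k ![Polynomial.X, 0, 0] w := by
    intro w; simp [hπdef]
  have hπa : π a = Polynomial.X := by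
    rw [← hea, hπe]; simp
  have hπb : π b = 0 := by
    rw [← heb, hπe]; simp
  have hπt : π t = 0 := by
    rw [← het, hπe]; simp
  -- the set of homogeneous elements whose differential is killed by π
  set S : Set Γ := {x | (∃ n, x ∈ 𝒜 n) ∧ π (D x) = 0} with hSdef
  have hSmul : ∀ x ∈ S, ∀ y ∈ S, x * y ∈ S := by
    rintro x ⟨⟨m, hm⟩, hx⟩ y ⟨⟨n, hn⟩, hy⟩
    refine ⟨⟨m + n, SetLike.mul_mem_graded hm hn⟩, ?_⟩
    rw [hLeibniz m n x y hm hn]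
    rw [map_add, map_zsmul, map_mul, map_mul, hx, hy]
    simp
  have h1S : (1 : Γ) ∈ S := ⟨⟨0, h1⟩, by rw [hD1, map_zero]⟩
  have haS : a ∈ S := ⟨⟨-1, ha⟩, by rw [hDa, map_zero]⟩
  have hbS : b ∈ S := ⟨⟨-2, hb⟩, by rw [hDb, map_zero]⟩
  have htS : t ∈ S := ⟨⟨-4, ht⟩, by rw [hDt, map_sub, map_mul, map_mul, hπa, hπb]; ring⟩
  -- span of S is everything
  have hspan : Submodule.span k S = ⊤ := by
    rw [eq_top_iff]
    intro z _
    have key : ∀ w : FreeAlgebra k (Fin 3), e w ∈ Submodule.span k S := by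
      intro w
      induction w using FreeAlgebra.induction with
      | grade0 c =>
        have hc : e (algebraMap k _ c) = algebraMap k Γ c := by
          simp [AlgEquiv.commutes]
        rw [hc, Algebra.algebraMap_eq_smul_one]
        exact Submodule.smul_mem _ _ (Submodule.subset_span h1S)
      | grade1 i =>
        fin_cases i
        · show e (FreeAlgebra.ι k 0) ∈ _
          rw [hea]; exact Submodule.subset_span haS
        · show e (FreeAlgebra.ι k 1) ∈ _
          rw [heb]; exact Submodule.subset_span hbS
        · show e (FreeAlgebra.ι k 2) ∈ _
          rw [het]; exact Submodule.subset_span htS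
      | mul x y hx hy =>
        rw [map_mul]
        have hmul : Submodule.span k S * Submodule.span k S ≤ Submodule.span k S := by
          rw [Submodule.span_mul_span]
          apply Submodule.span_le.mpr
          rintro z ⟨u, hu, v, hv, rfl⟩
          exact Submodule.subset_span (hSmul u hu v hv)
        exact hmul (Submodule.mul_mem_mul hx hy)
      | add x y hx hy =>
        rw [map_add]; exact Submodule.add_mem _ hx hy
    have := key (e.symm z)
    simpa using this
  -- hence π ∘ D = 0
  have hπD : ∀ z : Γ, π (D z) = 0 := by
    intro z
    have hz : z ∈ Submodule.span k S := by rw [hspan]; trivial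
    induction hz using Submodule.span_induction with
    | mem x hx => exact hx.2
    | zero => simp
    | add x y _ _ hx hy => rw [map_add, map_add, hx, hy, add_zero]
    | smul c x _ hx => rw [map_smul, map_smul, hx, smul_zero]
  refine ⟨a ^ r, hapow r, hDapow r, ?_⟩
  rintro ⟨y, hy⟩
  have hX : (Polynomial.X : Polynomial k) ^ r = 0 := by
    have h := hπD y
    rw [hy, map_pow, hπa] at h
    exact h
  exact pow_ne_zero r Polynomial.X_ne_zero hX
end

section
/- In the dg algebra Γ with one vertex and loops a (degree -1), b (degree -2), t (degree -4), and differential d(a) = d(b) = 0, d(t) = ab - ba, the element a^r is a cocycle of degree -r that is not a coboundary, for every r ≥ 1. -/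
/-- Let `Γ = kQ` be the free graded path algebra on one vertex and
three loops `a, b, t` of degrees `-1, -2, -4`, with differential `D` of degree
`+1` (a graded derivation with `D ∘ D = 0`) determined by `D a = 0`, `D b = 0`,
`D t = a*b - b*a`.  Then for every `r ≥ 1` the element `a^r` is a cocycle of
degree `-r` which is not a coboundary. -/
theorem pow_a_cocycle_not_coboundary
    (k : Type*) [Field k] (Γ : Type*) [Ring Γ] [Algebra k Γ]
    (𝒜 : ℤ → Submodule k Γ) [GradedAlgebra 𝒜]
    (D : Γ →ₗ[k] Γ)
    (hD2 : ∀ x, D (D x) = 0)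
    (hDdeg : ∀ (n : ℤ) (x : Γ), x ∈ 𝒜 n → D x ∈ 𝒜 (n + 1))
    (hLeibniz : ∀ (m n : ℤ) (x y : Γ), x ∈ 𝒜 m → y ∈ 𝒜 n →
      D (x * y) = D x * y + ((Int.negOnePow m : ℤˣ) : ℤ) • (x * D y))
    (a b t : Γ)
    (ha : a ∈ 𝒜 (-1)) (hb : b ∈ 𝒜 (-2)) (ht : t ∈ 𝒜 (-4))
    -- `Γ` is free on the generators `a, b, t`
    (e : FreeAlgebra k (Fin 3) ≃ₐ[k] Γ)
    (hea : e (FreeAlgebra.ι k 0) = a) (heb : e (FreeAlgebra.ι k 1) = b)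
    (het : e (FreeAlgebra.ι k 2) = t)
    (hDa : D a = 0) (hDb : D b = 0) (hDt : D t = a * b - b * a) :
    ∀ r : ℕ, 1 ≤ r → a ^ r ∈ 𝒜 (-(r : ℤ)) ∧ D (a ^ r) = 0 ∧ a ^ r ∉ Set.range D := by
  have h1 : (1 : Γ) ∈ 𝒜 0 := SetLike.one_mem_graded 𝒜
  have hD1 : D 1 = 0 := by
    have h := hLeibniz 0 0 1 1 h1 h1
    simp only [one_mul, mul_one, Int.negOnePow_zero, Units.val_one, one_smul] at h
    exact left_eq_add.mp h
  -- membership of powers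
  have hpow : ∀ r : ℕ, a ^ r ∈ 𝒜 (-(r : ℤ)) := by
    intro r
    have := SetLike.pow_mem_graded (A := 𝒜) r ha
    simpa using this
  -- D (a ^ r) = 0
  have hDpow : ∀ r : ℕ, D (a ^ r) = 0 := by
    intro r
    induction r with
    | zero => simpa using hD1
    | succ n ih =>
        rw [pow_succ']
        rw [hLeibniz (-1) (-(n : ℤ)) a (a ^ n) ha (hpow n), hDa, ih]
        simp
  -- detection homomorphism
  classical
  let f : Fin 3 → Polynomial k := fun i => if i = 0 then Polynomial.X else 0
  let π : Γ →ₐ[k] Polynomial k := (FreeAlgebra.lift k f).comp e.symm.toAlgHom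
  have hπa : π a = Polynomial.X := by
    have : e.symm a = FreeAlgebra.ι k 0 := by rw [← hea]; simp
    simp [π, this, f]
  have hπb : π b = 0 := by
    have : e.symm b = FreeAlgebra.ι k 1 := by rw [← heb]; simp
    simp [π, this, f]
  have hπt : π t = 0 := by
    have : e.symm t = FreeAlgebra.ι k 2 := by rw [← het]; simp
    simp [π, this, f]
  -- every element of Γ is in the span of the monoid closure of {a, b, t}
  have htop : Algebra.adjoin k ({a, b, t} : Set Γ) = ⊤ := by
    have hset : ({a, b, t} : Set Γ) = ⇑e '' Set.range (FreeAlgebra.ι k) := by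
      ext x
      constructor
      · rintro (rfl | rfl | rfl)
        · exact ⟨FreeAlgebra.ι k 0, ⟨0, rfl⟩, hea⟩
        · exact ⟨FreeAlgebra.ι k 1, ⟨1, rfl⟩, heb⟩
        · exact ⟨FreeAlgebra.ι k 2, ⟨2, rfl⟩, het⟩
      · rintro ⟨y, ⟨i, rfl⟩, rfl⟩
        fin_cases i
        · left; exact hea
        · right; left; exact heb
        · right; right; exact het
    have h2 := AlgHom.map_adjoin (e : FreeAlgebra k (Fin 3) →ₐ[k] Γ)
      (Set.range (FreeAlgebra.ι k))
    rw [FreeAlgebra.adjoin_range_ι, Algebra.map_top] at h2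
    rw [hset, show ⇑e = ⇑(e : FreeAlgebra k (Fin 3) →ₐ[k] Γ) from rfl, ← h2]
    exact (AlgHom.range_eq_top _).mpr e.surjective
  -- key: π ∘ D = 0
  have key : ∀ x : Γ, π (D x) = 0 := by
    have hmono : ∀ w ∈ Submonoid.closure ({a, b, t} : Set Γ),
        ∃ n : ℤ, w ∈ 𝒜 n ∧ π (D w) = 0 := by
      intro w hw
      induction hw using Submonoid.closure_induction with
      | mem x hx =>
          rcases hx with rfl | rfl | rfl
          · exact ⟨-1, ha, by rw [hDa]; simp⟩
          · exact ⟨-2, hb, by rw [hDb]; simp⟩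
          · exact ⟨-4, ht, by rw [hDt]; simp [hπa, hπb]⟩
      | one => exact ⟨0, h1, by rw [hD1]; simp⟩
      | mul x y _ _ hx hy =>
          obtain ⟨m, hxm, hxπ⟩ := hx
          obtain ⟨n, hyn, hyπ⟩ := hy
          refine ⟨m + n, SetLike.mul_mem_graded hxm hyn, ?_⟩
          rw [hLeibniz m n x y hxm hyn]
          simp [hxπ, hyπ]
    intro x
    have hx : x ∈ Submodule.span k (Submonoid.closure ({a, b, t} : Set Γ) : Set Γ) := by
      rw [← Algebra.adjoin_eq_span, htop]
      trivial
    refine Submodule.span_induction (p := fun x _ => π (D x) = 0)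
      (fun w hw => by obtain ⟨n, -, h⟩ := hmono w hw; exact h) (by simp)
      (fun x y _ _ hx hy => by show π (D (x + y)) = 0; rw [map_add, map_add]; rw [hx, hy, add_zero])
      (fun c x _ hx => by show π (D (c • x)) = 0; rw [map_smul, map_smul]; rw [hx, smul_zero]) hx
  intro r hr
  refine ⟨hpow r, hDpow r, ?_⟩
  rintro ⟨x, hx⟩
  have h0 : π (a ^ r) = 0 := hx ▸ key x
  rw [map_pow, hπa] at h0
  exact pow_ne_zero r Polynomial.X_ne_zero h0
end

section
/- Let T = T₁ ⊕ T₂ be a silting object in a triangulated category T with T₁ indecomposable, and suppose T₁ admits a left add(T₂)-approximation f: T₁ → T̃₂. Then Cone(f) ⊕ T₂ is again a silting object in T. -/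
/-!
The positive Hom-vanishing for `Cf ⊞ T₂` is read off the long exact Hom sequences of the
triangle `T₁ ⟶ E ⟶ Cf ⟶ T₁⟦1⟧`, using `E ∈ add T₂`; the one case not forced by the old
vanishing, `Hom(Cf, T₂⟦1⟧) = 0`, holds because every map `T₁ ⟶ T₂` factors through `f`.
Generation: `T₁` is the cocone of `g`, so it lies in the thick closure of `Cf ⊞ T₂`, hence so
does `T₁ ⊞ T₂`, and with it everything.
-/

open CategoryTheory Limits Pretriangulated

variable {C : Type*} [Category C] [Preadditive C] [HasZeroObject C]
  [HasShift C ℤ] [∀ n : ℤ, (CategoryTheory.shiftFunctor C n).Additive]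
  [Pretriangulated C] [HasBinaryBiproducts C] [HasFiniteBiproducts C]

/-- `X` lies in `add T`: `X` is a direct summand of a finite direct sum of
copies of `T`. -/
def InAdd (X T : C) : Prop :=
  ∃ (n : ℕ) (i : X ⟶ ⨁ fun _ : Fin n => T) (p : (⨁ fun _ : Fin n => T) ⟶ X),
    i ≫ p = 𝟙 X

/-- The thick subcategory generated by `G`: the closure of `G` under
isomorphisms, shifts, extensions (distinguished triangles) and direct
summands. -/
inductive ThickClosure (G : C) : C → Prop
  | base : ThickClosure G G
  | iso {X Y : C} : (X ≅ Y) → ThickClosure G X → ThickClosure G Y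
  | shift (X : C) (n : ℤ) : ThickClosure G X → ThickClosure G (X⟦n⟧)
  | ext {X Y Z : C} {f : X ⟶ Y} {g : Y ⟶ Z} {h : Z ⟶ X⟦(1 : ℤ)⟧} :
      (Triangle.mk f g h ∈ distTriang C) →
      ThickClosure G X → ThickClosure G Z → ThickClosure G Y
  | retract {X Y : C} (i : X ⟶ Y) (p : Y ⟶ X) :
      i ≫ p = 𝟙 X → ThickClosure G Y → ThickClosure G X

/-- `T` is a silting object: it has no positive self-extensions and generates
the whole category as a thick subcategory. -/
def IsSilting (T : C) : Prop :=
  (∀ i : ℤ, 0 < i → ∀ f : T ⟶ T⟦i⟧, f = 0) ∧ ∀ X : C, ThickClosure T X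

section Preadditive

variable {D : Type*} [Category D] [Preadditive D]

lemma homZero_tgt_iso_iff {A X Y : D} (e : X ≅ Y) :
    (∀ φ : A ⟶ X, φ = 0) ↔ ∀ φ : A ⟶ Y, φ = 0 :=
  ⟨fun h φ => by rw [← cancel_mono e.inv, h (φ ≫ e.inv), zero_comp],
    fun h φ => by rw [← cancel_mono e.hom, h (φ ≫ e.hom), zero_comp]⟩

lemma homZero_biprod_src_iff {A₁ A₂ B : D} [HasBinaryBiproduct A₁ A₂] :
    (∀ φ : A₁ ⊞ A₂ ⟶ B, φ = 0) ↔ (∀ φ : A₁ ⟶ B, φ = 0) ∧ ∀ φ : A₂ ⟶ B, φ = 0 :=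
  ⟨fun h => ⟨fun φ => by simpa using congrArg (biprod.inl ≫ ·) (h (biprod.fst ≫ φ)),
      fun φ => by simpa using congrArg (biprod.inr ≫ ·) (h (biprod.snd ≫ φ))⟩,
    fun ⟨h₁, h₂⟩ _ => biprod.hom_ext' _ _ (by simpa using h₁ _) (by simpa using h₂ _)⟩

lemma homZero_biprod_tgt_iff {A B₁ B₂ : D} [HasBinaryBiproduct B₁ B₂] :
    (∀ φ : A ⟶ B₁ ⊞ B₂, φ = 0) ↔ (∀ φ : A ⟶ B₁, φ = 0) ∧ ∀ φ : A ⟶ B₂, φ = 0 :=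
  ⟨fun h => ⟨fun φ => by simpa using congrArg (· ≫ biprod.fst) (h (φ ≫ biprod.inl)),
      fun φ => by simpa using congrArg (· ≫ biprod.snd) (h (φ ≫ biprod.inr))⟩,
    fun ⟨h₁, h₂⟩ _ => biprod.hom_ext _ _ (by simpa using h₁ _) (by simpa using h₂ _)⟩

variable [HasFiniteBiproducts D]

lemma inAdd_self (T : D) : InAdd T T :=
  ⟨1, biproduct.lift fun _ => 𝟙 T, biproduct.π _ 0, by simp⟩

lemma InAdd.shift [HasShift D ℤ] [∀ n : ℤ, (shiftFunctor D n).Additive] {X T : D}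
    (hX : InAdd X T) (n : ℤ) : InAdd (X⟦n⟧) (T⟦n⟧) := by
  obtain ⟨m, i, p, hip⟩ := hX
  refine ⟨m, i⟦n⟧' ≫ ((shiftFunctor D n).mapBiproduct _).hom,
    ((shiftFunctor D n).mapBiproduct _).inv ≫ p⟦n⟧', ?_⟩
  rw [Category.assoc, Iso.hom_inv_id_assoc, ← Functor.map_comp, hip, CategoryTheory.Functor.map_id]

lemma homZero_src_of_inAdd {X T B : D} (hX : InAdd X T) (hT : ∀ φ : T ⟶ B, φ = 0) :
    ∀ φ : X ⟶ B, φ = 0 := fun φ => by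
  obtain ⟨n, i, p, hip⟩ := hX
  have hp : p ≫ φ = 0 := biproduct.hom_ext' _ _ fun j => by
    simpa using hT (biproduct.ι (fun _ : Fin n => T) j ≫ p ≫ φ)
  rw [← Category.id_comp φ, ← hip, Category.assoc, hp, comp_zero]

lemma homZero_tgt_of_inAdd {X T A : D} (hX : InAdd X T) (hT : ∀ φ : A ⟶ T, φ = 0) :
    ∀ φ : A ⟶ X, φ = 0 := fun φ => by
  obtain ⟨n, i, p, hip⟩ := hX
  have hi : φ ≫ i = 0 := biproduct.hom_ext _ _ fun j => by
    simpa using hT (φ ≫ i ≫ biproduct.π (fun _ : Fin n => T) j)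
  rw [← Category.comp_id φ, ← hip, ← Category.assoc, hi, zero_comp]

end Preadditive

section ShiftVanishing

variable {D : Type*} [Category D] [Preadditive D] [HasShift D ℤ]

def HomShiftPosZero (A B : D) : Prop :=
  ∀ j : ℤ, 0 < j → ∀ φ : A ⟶ B⟦j⟧, φ = 0

lemma HomShiftPosZero.of_inAdd_left [HasFiniteBiproducts D] {X T B : D}
    (h : HomShiftPosZero T B) (hX : InAdd X T) : HomShiftPosZero X B :=
  fun j hj => homZero_src_of_inAdd hX (h j hj)

lemma HomShiftPosZero.of_inAdd_right [HasFiniteBiproducts D]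
    [∀ n : ℤ, (shiftFunctor D n).Additive] {A X T : D}
    (h : HomShiftPosZero A T) (hX : InAdd X T) : HomShiftPosZero A X :=
  fun j hj => homZero_tgt_of_inAdd (hX.shift j) (h j hj)

variable [HasBinaryBiproducts D]

lemma homShiftPosZero_biprod_left_iff {A₁ A₂ B : D} :
    HomShiftPosZero (A₁ ⊞ A₂) B ↔ HomShiftPosZero A₁ B ∧ HomShiftPosZero A₂ B := by
  simp only [HomShiftPosZero, ← forall₂_and]
  exact forall₂_congr fun _ _ => homZero_biprod_src_iff

lemma homShiftPosZero_biprod_right_iff [∀ n : ℤ, (shiftFunctor D n).Additive] {A B₁ B₂ : D} :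
    HomShiftPosZero A (B₁ ⊞ B₂) ↔ HomShiftPosZero A B₁ ∧ HomShiftPosZero A B₂ := by
  simp only [HomShiftPosZero, ← forall₂_and]
  refine forall₂_congr fun j _ => ?_
  have := preservesBinaryBiproducts_of_preservesBiproducts (shiftFunctor D j)
  rw [homZero_tgt_iso_iff ((shiftFunctor D j).mapBiprod B₁ B₂), homZero_biprod_tgt_iff]

end ShiftVanishing

section Triangulated

variable {D : Type*} [Category D] [Preadditive D] [HasZeroObject D] [HasShift D ℤ]
  [∀ n : ℤ, (shiftFunctor D n).Additive] [Pretriangulated D]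

lemma homZero_shift_obj₃ {T : Triangle D} (hT : T ∈ distTriang D) {A : D} {j : ℤ}
    (h₂ : ∀ φ : A ⟶ T.obj₂⟦j⟧, φ = 0) (h₁ : ∀ φ : A ⟶ T.obj₁⟦j + 1⟧, φ = 0) :
    ∀ φ : A ⟶ T.obj₃⟦j⟧, φ = 0 := by
  intro φ
  have h₁' := (homZero_tgt_iso_iff ((shiftFunctorAdd' D j 1 (j + 1) rfl).app T.obj₁)).1 h₁
  obtain ⟨ψ, rfl⟩ := Triangle.coyoneda_exact₃ _ (Triangle.shift_distinguished T hT j) φ (h₁' _)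
  rw [h₂ ψ]
  exact zero_comp

lemma homZero_obj₃_shift_src {T : Triangle D} (hT : T ∈ distTriang D) {B : D} {j : ℤ}
    (h₂ : ∀ φ : T.obj₂ ⟶ B⟦j⟧, φ = 0) (h₁ : ∀ φ : T.obj₁ ⟶ B⟦j - 1⟧, φ = 0) :
    ∀ φ : T.obj₃ ⟶ B⟦j⟧, φ = 0 := by
  intro φ
  obtain ⟨ψ, rfl⟩ := Triangle.yoneda_exact₃ T hT φ (h₂ _)
  have hψ : ∀ ψ : T.obj₁⟦(1 : ℤ)⟧ ⟶ B⟦j - 1⟧⟦(1 : ℤ)⟧, ψ = 0 := fun ψ => by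
    obtain ⟨ψ₀, rfl⟩ := (shiftFunctor D (1 : ℤ)).map_surjective ψ
    rw [h₁ ψ₀, Functor.map_zero]
  rw [(homZero_tgt_iso_iff ((shiftFunctorAdd' D (j - 1) 1 j (by omega)).app B)).2 hψ ψ, comp_zero]

lemma ThickClosure.trans {G G' X : D} (hX : ThickClosure G X) (hG : ThickClosure G' G) :
    ThickClosure G' X := by
  induction hX with
  | base => exact hG
  | iso e _ ih => exact .iso e ih
  | shift X n _ ih => exact .shift X n ih
  | ext hT _ _ ih₁ ih₂ => exact .ext hT ih₁ ih₂
  | retract i p hip _ ih => exact .retract i p hip ih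

lemma ThickClosure.biprod [HasBinaryBiproducts D] {G X Y : D} (hX : ThickClosure G X)
    (hY : ThickClosure G Y) : ThickClosure G (X ⊞ Y) :=
  .ext (binaryBiproductTriangle_distinguished X Y) hX hY

lemma ThickClosure.finBiproduct [HasBinaryBiproducts D] [HasFiniteBiproducts D] {G T : D}
    (hT : ThickClosure G T) (n : ℕ) : ThickClosure G (⨁ fun _ : Fin n => T) := by
  induction n with
  | zero => exact .retract 0 0 (biproduct.hom_ext _ _ fun j => j.elim0) hT
  | succ n ih =>
    let π := biproduct.π (fun _ : Fin (n + 1) => T)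
    let ι := biproduct.ι (fun _ : Fin (n + 1) => T)
    refine .retract (biprod.lift (π 0) (biproduct.lift fun k : Fin n => π k.succ))
      (biprod.desc (ι 0) (biproduct.desc fun k : Fin n => ι k.succ)) ?_ (hT.biprod ih)
    rw [biprod.lift_desc, biproduct.lift_desc, ← biproduct.total]
    exact (Fin.sum_univ_succ fun j => π j ≫ ι j).symm

lemma ThickClosure.of_inAdd [HasBinaryBiproducts D] [HasFiniteBiproducts D] {G X T : D}
    (hT : ThickClosure G T) (hX : InAdd X T) : ThickClosure G X := by
  obtain ⟨n, i, p, hip⟩ := hX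
  exact .retract i p hip (hT.finBiproduct n)

end Triangulated

section Mutation

variable {D : Type*} [Category D] [Preadditive D] [HasZeroObject D] [HasShift D ℤ]
  [∀ n : ℤ, (shiftFunctor D n).Additive] [Pretriangulated D]
  {T₁ E Cf : D} {f : T₁ ⟶ E} {g : E ⟶ Cf} {h : Cf ⟶ T₁⟦(1 : ℤ)⟧}

/-- Every map `T₁⟦1⟧ ⟶ X⟦1⟧` factors through `f⟦1⟧'`, which `h` kills. -/
lemma homZero_cone_shift_one_of_leftApprox (hdist : Triangle.mk f g h ∈ distTriang D) {X : D}
    (happrox : ∀ u : T₁ ⟶ X, ∃ v : E ⟶ X, f ≫ v = u) (hEX : ∀ φ : E ⟶ X⟦(1 : ℤ)⟧, φ = 0) :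
    ∀ φ : Cf ⟶ X⟦(1 : ℤ)⟧, φ = 0 := by
  intro φ
  obtain ⟨ψ, rfl⟩ := Triangle.yoneda_exact₃ _ hdist φ (hEX _)
  obtain ⟨u, rfl⟩ := (shiftFunctor D (1 : ℤ)).map_surjective ψ
  obtain ⟨v, rfl⟩ := happrox u
  have hhf : h ≫ f⟦(1 : ℤ)⟧' = 0 := comp_distTriang_mor_zero₃₁ _ hdist
  dsimp only [Triangle.mk]
  rw [Functor.map_comp, ← Category.assoc, hhf, zero_comp]

lemma homShiftPosZero_cone_of_leftApprox (hdist : Triangle.mk f g h ∈ distTriang D) {X : D}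
    (happrox : ∀ u : T₁ ⟶ X, ∃ v : E ⟶ X, f ≫ v = u) (hEX : HomShiftPosZero E X)
    (hT₁X : HomShiftPosZero T₁ X) : HomShiftPosZero Cf X := by
  intro j hj
  obtain rfl | hj : j = 1 ∨ 1 < j := by omega
  · exact homZero_cone_shift_one_of_leftApprox hdist happrox (hEX 1 hj)
  · exact homZero_obj₃_shift_src hdist (hEX j (by omega)) (hT₁X (j - 1) (by omega))

variable [HasBinaryBiproducts D] [HasFiniteBiproducts D] {T₂ : D}

lemma homShiftPosZero_mutation (hdist : Triangle.mk f g h ∈ distTriang D)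
    (hT : HomShiftPosZero (T₁ ⊞ T₂) (T₁ ⊞ T₂)) (hE : InAdd E T₂)
    (happrox : ∀ u : T₁ ⟶ T₂, ∃ v : E ⟶ T₂, f ≫ v = u) :
    HomShiftPosZero (Cf ⊞ T₂) (Cf ⊞ T₂) := by
  rw [homShiftPosZero_biprod_left_iff, homShiftPosZero_biprod_right_iff,
    homShiftPosZero_biprod_right_iff] at hT ⊢
  obtain ⟨⟨h₁₁, h₁₂⟩, h₂₁, h₂₂⟩ := hT
  have hCfT₂ : HomShiftPosZero Cf T₂ :=
    homShiftPosZero_cone_of_leftApprox hdist happrox (h₂₂.of_inAdd_left hE) h₁₂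
  have hT₂Cf : HomShiftPosZero T₂ Cf := fun j hj =>
    homZero_shift_obj₃ hdist (h₂₂.of_inAdd_right hE j hj) (h₂₁ (j + 1) (by omega))
  have hCfT₁ : ∀ j : ℤ, 1 < j → ∀ φ : Cf ⟶ T₁⟦j⟧, φ = 0 := fun j hj =>
    homZero_obj₃_shift_src hdist (h₂₁.of_inAdd_left hE j (by omega)) (h₁₁ (j - 1) (by omega))
  have hCfCf : HomShiftPosZero Cf Cf := fun j hj =>
    homZero_shift_obj₃ hdist (hCfT₂.of_inAdd_right hE j hj) (hCfT₁ (j + 1) (by omega))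
  exact ⟨⟨hCfCf, hCfT₂⟩, hT₂Cf, h₂₂⟩

lemma thickClosure_mutation (hdist : Triangle.mk f g h ∈ distTriang D) (hE : InAdd E T₂) :
    ThickClosure (Cf ⊞ T₂) (T₁ ⊞ T₂) := by
  have hCf : ThickClosure (Cf ⊞ T₂) Cf := .retract biprod.inl biprod.fst biprod.inl_fst .base
  have hT₂ : ThickClosure (Cf ⊞ T₂) T₂ := .retract biprod.inr biprod.snd biprod.inr_snd .base
  have hT₁ : ThickClosure (Cf ⊞ T₂) T₁ :=
    .ext (inv_rot_of_distTriang _ hdist) (.shift Cf (-1) hCf) (hT₂.of_inAdd hE)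
  exact hT₁.biprod hT₂

end Mutation

theorem silting_mutation_is_silting_general (T₁ T₂ : C)
    (hsilt : IsSilting (T₁ ⊞ T₂))
    (E : C) (hE : InAdd E T₂) (f : T₁ ⟶ E)
    (happrox : ∀ (X : C), InAdd X T₂ → ∀ g : T₁ ⟶ X, ∃ h : E ⟶ X, f ≫ h = g)
    (Cf : C) (g : E ⟶ Cf) (h : Cf ⟶ T₁⟦(1 : ℤ)⟧)
    (hdist : Triangle.mk f g h ∈ distTriang C) :
    IsSilting (Cf ⊞ T₂) :=
  ⟨homShiftPosZero_mutation hdist hsilt.1 hE (happrox T₂ (inAdd_self T₂)),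
    fun X => (hsilt.2 X).trans (thickClosure_mutation hdist hE)⟩

/-- Let `T = T₁ ⊞ T₂` be a silting object in a triangulated
category `C` with `T₁` indecomposable, and suppose `T₁` admits a left
`add T₂`-approximation `f : T₁ ⟶ E`.  Complete `f` to a distinguished triangle
`T₁ ⟶ E ⟶ Cf ⟶ T₁⟦1⟧`.  Then `Cf ⊞ T₂` is again a silting object. -/
theorem silting_mutation_is_silting (T₁ T₂ : C)
    (hT₁ : ∀ (X Y : C), ¬(Nonempty (T₁ ≅ X ⊞ Y) ∧ ¬IsZero X ∧ ¬IsZero Y))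
    (hsilt : IsSilting (T₁ ⊞ T₂))
    (E : C) (hE : InAdd E T₂) (f : T₁ ⟶ E)
    (happrox : ∀ (X : C), InAdd X T₂ → ∀ g : T₁ ⟶ X, ∃ h : E ⟶ X, f ≫ h = g)
    (Cf : C) (g : E ⟶ Cf) (h : Cf ⟶ T₁⟦(1 : ℤ)⟧)
    (hdist : Triangle.mk f g h ∈ distTriang C) :
    IsSilting (Cf ⊞ T₂) :=
  silting_mutation_is_silting_general T₁ T₂ hsilt E hE f happrox Cf g h hdist
end
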